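/- On the flat cone ℝⁿ/Γ for a finite group Γ ⊂ SO(n) acting freely on the unit sphere, Perelman's μ-functional satisfies μ(ℝⁿ/Γ, τ) = −log|Γ| for every τ > 0, computed by evaluating the W-functional on the normalized Gaussian. -/

import Mathlib

open Real MeasureTheory

lemma integrable_gauss (n : ℕ) {b : ℝ} (hb : 0 < b) :
    Integrable (fun x : EuclideanSpace ℝ (Fin n) => Real.exp (-b * ‖x‖ ^ 2)) := by
  have h := (GaussianFourier.integrable_cexp_neg_mul_sq_norm_add
      (V := EuclideanSpace ℝ (Fin n)) (b := (b : ℂ)) (by simpa using hb) 0 0).norm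
  convert h using 2 with x
  rw [Complex.norm_exp]
  norm_num [← Complex.ofReal_pow]

lemma cont_gauss (n : ℕ) (b : ℝ) :
    Continuous (fun x : EuclideanSpace ℝ (Fin n) => Real.exp (-b * ‖x‖ ^ 2)) :=
  Real.continuous_exp.comp (continuous_const.mul (continuous_norm.pow 2))

lemma integrable_sq_gauss (n : ℕ) {b : ℝ} (hb : 0 < b) :
    Integrable (fun x : EuclideanSpace ℝ (Fin n) => ‖x‖ ^ 2 * Real.exp (-b * ‖x‖ ^ 2)) := by
  have h0 : Integrable (fun x : EuclideanSpace ℝ (Fin n) =>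
      (2 / b) * Real.exp (-(b / 2) * ‖x‖ ^ 2)) :=
    (integrable_gauss n (half_pos hb)).const_mul _
  refine h0.mono' ((continuous_norm.pow 2).mul (cont_gauss n b)).aestronglyMeasurable ?_
  filter_upwards with x
  rw [Real.norm_eq_abs, abs_of_nonneg (by positivity)]
  have h2 : (b / 2) * ‖x‖ ^ 2 ≤ Real.exp ((b / 2) * ‖x‖ ^ 2) := by
    have := Real.add_one_le_exp ((b / 2) * ‖x‖ ^ 2); linarith
  have h1 : ‖x‖ ^ 2 ≤ (2 / b) * Real.exp ((b / 2) * ‖x‖ ^ 2) := by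
    rw [← sub_nonneg]
    have : (2 / b) * Real.exp ((b / 2) * ‖x‖ ^ 2) - ‖x‖ ^ 2
        = (2 / b) * (Real.exp ((b / 2) * ‖x‖ ^ 2) - (b / 2) * ‖x‖ ^ 2) := by
      field_simp
    rw [this]
    exact mul_nonneg (by positivity) (sub_nonneg.mpr h2)
  calc ‖x‖ ^ 2 * Real.exp (-b * ‖x‖ ^ 2)
      ≤ ((2 / b) * Real.exp ((b / 2) * ‖x‖ ^ 2)) * Real.exp (-b * ‖x‖ ^ 2) :=
        mul_le_mul_of_nonneg_right h1 (Real.exp_pos _).le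
    _ = (2 / b) * Real.exp (-(b / 2) * ‖x‖ ^ 2) := by
        rw [mul_assoc, ← Real.exp_add]; ring_nf

lemma gauss_int (n : ℕ) {b : ℝ} (hb : 0 < b) :
    ∫ x : EuclideanSpace ℝ (Fin n), Real.exp (-b * ‖x‖ ^ 2) = (π / b) ^ ((n : ℝ) / 2) := by
  rw [GaussianFourier.integral_rexp_neg_mul_sq_norm hb]
  norm_num [finrank_euclideanSpace_fin]

lemma gauss_sq_int (n : ℕ) {b : ℝ} (hb : 0 < b) :
    ∫ x : EuclideanSpace ℝ (Fin n), ‖x‖ ^ 2 * Real.exp (-b * ‖x‖ ^ 2)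
      = ((n : ℝ) / 2) * π ^ ((n : ℝ) / 2) * b ^ (-(n : ℝ) / 2 - 1) := by
  set r : ℝ := (n : ℝ) / 2 with hr
  -- derivative of the integral via dominated convergence
  have key := hasDerivAt_integral_of_dominated_loc_of_deriv_le
      (F := fun c (x : EuclideanSpace ℝ (Fin n)) => Real.exp (-c * ‖x‖ ^ 2))
      (F' := fun c (x : EuclideanSpace ℝ (Fin n)) => -(‖x‖ ^ 2 * Real.exp (-c * ‖x‖ ^ 2)))
      (x₀ := b) (bound := fun x => ‖x‖ ^ 2 * Real.exp (-(b / 2) * ‖x‖ ^ 2))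
      (s := Metric.ball b (b / 2)) (Metric.ball_mem_nhds b (half_pos hb))
      (Filter.Eventually.of_forall fun c => (cont_gauss n c).aestronglyMeasurable)
      (integrable_gauss n hb)
      (((continuous_norm.pow 2).mul (cont_gauss n b)).neg.aestronglyMeasurable)
      (Filter.Eventually.of_forall fun x => fun c hc => by
        have hc2 : b / 2 < c := by
          have h' := mem_ball_iff_norm.mp hc
          rw [Real.norm_eq_abs] at h'
          have := abs_lt.mp h'
          linarith
        have : Real.exp (-c * ‖x‖ ^ 2) ≤ Real.exp (-(b / 2) * ‖x‖ ^ 2) := by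
          apply Real.exp_le_exp.mpr
          nlinarith [sq_nonneg ‖x‖]
        rw [norm_neg, Real.norm_eq_abs, abs_of_nonneg (by positivity)]
        exact mul_le_mul_of_nonneg_left this (by positivity))
      (integrable_sq_gauss n (half_pos hb))
      (Filter.Eventually.of_forall fun x => fun c _ => by
        have h := (((hasDerivAt_id c).mul_const (‖x‖ ^ 2)).neg).exp
        convert h using 1
        · rfl
        · rfl
        show -(‖x‖ ^ 2 * Real.exp (-c * ‖x‖ ^ 2)) = Real.exp (-(c * ‖x‖ ^ 2)) * -(1 * ‖x‖ ^ 2)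
        rw [neg_mul]; ring
        funext y
        show Real.exp (-y * ‖x‖ ^ 2) = Real.exp (-(y * ‖x‖ ^ 2))
        rw [neg_mul])
  obtain ⟨-, hder⟩ := key
  -- the integral equals (π/c)^r in a neighborhood of b
  have heq : (fun c => ∫ x : EuclideanSpace ℝ (Fin n), Real.exp (-c * ‖x‖ ^ 2))
      =ᶠ[nhds b] fun c => π ^ r * c ^ (-r) := by
    filter_upwards [eventually_gt_nhds hb] with c hc
    rw [gauss_int n hc, Real.div_rpow pi_pos.le hc.le, Real.rpow_neg hc.le, div_eq_mul_inv, hr]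
  have hψ : HasDerivAt (fun c => π ^ r * c ^ (-r)) (π ^ r * (-r * b ^ (-r - 1))) b :=
    (Real.hasDerivAt_rpow_const (p := -r) (Or.inl (ne_of_gt hb))).const_mul _
  have h2 := hψ.congr_of_eventuallyEq heq
  have huniq := hder.unique h2
  rw [integral_neg] at huniq
  rw [show -(n : ℝ) / 2 - 1 = -r - 1 by rw [hr]; ring]
  linear_combination -huniq

lemma hasGradientAt_gauss {n : ℕ} {τ : ℝ} (hτ : 0 < τ) (x : EuclideanSpace ℝ (Fin n)) :
    HasGradientAt (fun y : EuclideanSpace ℝ (Fin n) => Real.exp (-‖y‖ ^ 2 / (8 * τ)))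
      ((-(4 * τ)⁻¹ * Real.exp (-‖x‖ ^ 2 / (8 * τ))) • x) x := by
  rw [hasGradientAt_iff_hasFDerivAt]
  have h1 := (hasFDerivAt_id (𝕜 := ℝ) (E := EuclideanSpace ℝ (Fin n)) x).inner ℝ
      (hasFDerivAt_id x)
  simp only [id_eq] at h1
  have hg : HasFDerivAt (fun y : EuclideanSpace ℝ (Fin n) => ‖y‖ ^ 2)
      ((InnerProductSpace.toDual ℝ (EuclideanSpace ℝ (Fin n))) ((2 : ℝ) • x)) x := by
    have h1' : HasFDerivAt (fun y : EuclideanSpace ℝ (Fin n) => ‖y‖ ^ 2)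
        ((fderivInnerCLM ℝ (x, x)).comp
          ((ContinuousLinearMap.id ℝ (EuclideanSpace ℝ (Fin n))).prod
            (ContinuousLinearMap.id ℝ (EuclideanSpace ℝ (Fin n))))) x := by
      refine h1.congr_of_eventuallyEq (Filter.Eventually.of_forall fun y => ?_)
      exact (real_inner_self_eq_norm_sq y).symm
    refine h1'.congr_fderiv ?_
    ext y
    simp only [ContinuousLinearMap.coe_comp', Function.comp_apply,
      ContinuousLinearMap.prod_apply, ContinuousLinearMap.coe_id', id_eq,
      fderivInnerCLM_apply, InnerProductSpace.toDual_apply_apply, real_inner_smul_left,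
      real_inner_comm x y]
    ring
  have hφ : HasDerivAt (fun t : ℝ => Real.exp (-t / (8 * τ)))
      (Real.exp (-‖x‖ ^ 2 / (8 * τ)) * (-1 / (8 * τ))) (‖x‖ ^ 2) := by
    have h := (((hasDerivAt_id (‖x‖ ^ 2)).neg).div_const (8 * τ)).exp
    convert h using 1 <;> simp only [Pi.neg_apply, id_eq] <;> ring_nf
  have hc := hφ.comp_hasFDerivAt x hg
  refine hc.congr_fderiv ?_
  rw [← _root_.map_smul]
  congr 1
  rw [smul_smul]
  congr 1
  field_simp
  ring

/-- Perelman's `μ`-functional of the flat cone `ℝⁿ/Γ` equals `−log|Γ|`,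
computed by evaluating the `W`-functional on the normalized Gaussian
`√|Γ|·Γ_τ`. The integral over `ℝⁿ/Γ` of the `Γ`-invariant integrand is
`1/|Γ|` times the integral over `ℝⁿ`. -/
theorem mu_flat_cone (n Γcard : ℕ) (hΓ : 1 ≤ Γcard) (τ : ℝ) (hτ : 0 < τ) :
    (1 / (Γcard : ℝ)) * ∫ x : EuclideanSpace ℝ (Fin n),
        (4 * τ * (Γcard : ℝ) * ‖gradient (fun y : EuclideanSpace ℝ (Fin n) =>
            Real.exp (-‖y‖ ^ 2 / (8 * τ))) x‖ ^ 2
          - (Γcard : ℝ) * Real.exp (-‖x‖ ^ 2 / (8 * τ)) ^ 2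
            * Real.log ((Γcard : ℝ) * Real.exp (-‖x‖ ^ 2 / (8 * τ)) ^ 2)
          - (n : ℝ) * (Γcard : ℝ) * Real.exp (-‖x‖ ^ 2 / (8 * τ)) ^ 2)
          * (4 * Real.pi * τ) ^ (-(n : ℝ) / 2)
      = -Real.log (Γcard : ℝ) := by
  have hΓ0 : (0 : ℝ) < Γcard := by exact_mod_cast hΓ
  set b : ℝ := (4 * τ)⁻¹ with hbdef
  have hb : 0 < b := by rw [hbdef]; positivity
  set G : ℝ := Real.log Γcard with hG
  -- pointwise identity for the integrand
  have hpt : ∀ x : EuclideanSpace ℝ (Fin n),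
      (4 * τ * (Γcard : ℝ) * ‖gradient (fun y : EuclideanSpace ℝ (Fin n) =>
            Real.exp (-‖y‖ ^ 2 / (8 * τ))) x‖ ^ 2
          - (Γcard : ℝ) * Real.exp (-‖x‖ ^ 2 / (8 * τ)) ^ 2
            * Real.log ((Γcard : ℝ) * Real.exp (-‖x‖ ^ 2 / (8 * τ)) ^ 2)
          - (n : ℝ) * (Γcard : ℝ) * Real.exp (-‖x‖ ^ 2 / (8 * τ)) ^ 2)
          * (4 * Real.pi * τ) ^ (-(n : ℝ) / 2)
      = ((Γcard : ℝ) * (2 * τ)⁻¹ * (‖x‖ ^ 2 * Real.exp (-b * ‖x‖ ^ 2))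
          + (Γcard : ℝ) * (-G - n) * Real.exp (-b * ‖x‖ ^ 2))
          * (4 * Real.pi * τ) ^ (-(n : ℝ) / 2) := by
    intro x
    congr 1
    rw [(hasGradientAt_gauss hτ x).gradient]
    have hE2 : Real.exp (-‖x‖ ^ 2 / (8 * τ)) ^ 2 = Real.exp (-b * ‖x‖ ^ 2) := by
      rw [sq, ← Real.exp_add, hbdef]
      congr 1
      field_simp
      ring
    have hlog : Real.log ((Γcard : ℝ) * Real.exp (-b * ‖x‖ ^ 2)) = G + (-b * ‖x‖ ^ 2) := by
      rw [Real.log_mul (ne_of_gt hΓ0) (Real.exp_ne_zero _), Real.log_exp, hG]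
    have hns : ‖(-(4 * τ)⁻¹ * Real.exp (-‖x‖ ^ 2 / (8 * τ))) • x‖ ^ 2
        = (4 * τ)⁻¹ ^ 2 * Real.exp (-‖x‖ ^ 2 / (8 * τ)) ^ 2 * ‖x‖ ^ 2 := by
      rw [norm_smul, mul_pow, Real.norm_eq_abs, sq_abs]
      ring
    rw [hns, hE2, hlog, hbdef]
    field_simp
    ring
  rw [integral_congr_ae (Filter.Eventually.of_forall hpt)]
  have hint1 : Integrable (fun x : EuclideanSpace ℝ (Fin n) =>
      (Γcard : ℝ) * (2 * τ)⁻¹ * (‖x‖ ^ 2 * Real.exp (-b * ‖x‖ ^ 2))) :=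
    (integrable_sq_gauss n hb).const_mul _
  have hint2 : Integrable (fun x : EuclideanSpace ℝ (Fin n) =>
      (Γcard : ℝ) * (-G - n) * Real.exp (-b * ‖x‖ ^ 2)) :=
    (integrable_gauss n hb).const_mul _
  rw [integral_mul_const, integral_add hint1 hint2, integral_const_mul, integral_const_mul,
    gauss_int n hb, gauss_sq_int n hb]
  -- now pure real arithmetic with rpow
  have h4τ : (0 : ℝ) < 4 * τ := by positivity
  have hπb : π / b = 4 * π * τ := by rw [hbdef]; field_simp
  have hbpow : b ^ (-(n : ℝ) / 2 - 1) = (4 * τ) ^ ((n : ℝ) / 2 + 1) := by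
    rw [hbdef, ← Real.rpow_neg_one (4 * τ), ← Real.rpow_mul h4τ.le]
    congr 1; ring
  have hsplit : (4 * τ) ^ ((n : ℝ) / 2 + 1) = (4 * τ) ^ ((n : ℝ) / 2) * (4 * τ) := by
    rw [Real.rpow_add h4τ, Real.rpow_one]
  have hmul : π ^ ((n : ℝ) / 2) * (4 * τ) ^ ((n : ℝ) / 2) = (4 * π * τ) ^ ((n : ℝ) / 2) := by
    rw [← Real.mul_rpow pi_pos.le h4τ.le]
    congr 1; ring
  have hPP : (4 * π * τ) ^ ((n : ℝ) / 2) * (4 * π * τ) ^ (-(n : ℝ) / 2) = 1 := by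
    rw [← Real.rpow_add (by positivity), show (n : ℝ) / 2 + -(n : ℝ) / 2 = 0 by ring,
      Real.rpow_zero]
  rw [hπb, hbpow, hsplit, ← hmul] at *
  have hΓne : (Γcard : ℝ) ≠ 0 := ne_of_gt hΓ0
  have hτne : τ ≠ 0 := ne_of_gt hτ
  field_simp
  linear_combination (norm := ring_nf) (-4 * G) * hPP
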